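/- arXiv:1104.1906 — 2 statements merged into one kernel-verified Lean document; each statement's English description precedes it below -/
import Mathlib

section
/- For any system G of integer-coefficient polynomials, the function (m_1,…,m_r) ↦ E_G(m_1,…,m_r) := (1/lcm(m_1,…,m_r))·Σ_{k=1}^{lcm(m_1,…,m_r)} c_{m_1}(g_1(k))···c_{m_r}(g_r(k)) is multiplicative, i.e., E_G(m_1 n_1,…,m_r n_r) = E_G(m_1,…,m_r)·E_G(n_1,…,n_r) whenever gcd(m_1···m_r, n_1···n_r) = 1. -/
/-!
For fixed `k`, `c_n(k)` is the Dirichlet convolution of `d ↦ d·[d ∣ k]` with `μ`, both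
multiplicative in `d`; hence `c_{ab}(k) = c_a(k) c_b(k)` for coprime `a, b`, and the summand of
`E_G(m n)` is the product of the summands of `E_G(m)` and `E_G(n)`. These have the coprime periods
`lcm m` and `lcm n`, and by the Chinese remainder theorem the sum over a period of length
`lcm m · lcm n` of such a product splits as the product of the two sums.
-/

open Finset ArithmeticFunction

/-- The Ramanujan sum `c_n(k) = ∑_{d ∣ gcd(k,n)} d · μ(n/d)`, for integer `k`. -/
def ramanujanSum (n : ℕ) (k : ℤ) : ℤ :=
  ∑ d ∈ (Int.gcd k n).divisors, (d : ℤ) * ArithmeticFunction.moebius (n / d)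

/-- `E_G(m₁,…,m_r) = (1/lcm(m₁,…,m_r)) ∑_{k=1}^{lcm} ∏ᵢ c_{mᵢ}(gᵢ(k))`. -/
def EG {r : ℕ} (g : Fin r → Polynomial ℤ) (m : Fin r → ℕ) : ℚ :=
  (1 / ((Finset.univ.lcm m : ℕ) : ℚ)) *
    ∑ k ∈ Icc 1 (Finset.univ.lcm m),
      ∏ i, (ramanujanSum (m i) ((g i).eval (k : ℤ)) : ℚ)

open Function
open scoped ArithmeticFunction.Moebius

def idDvdIndicator (k : ℤ) : ArithmeticFunction ℤ :=
  ⟨fun d => if (d : ℤ) ∣ k then d else 0, by simp⟩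

theorem idDvdIndicator_apply (k : ℤ) (d : ℕ) :
    idDvdIndicator k d = if (d : ℤ) ∣ k then (d : ℤ) else 0 := rfl

theorem isMultiplicative_idDvdIndicator (k : ℤ) : (idDvdIndicator k).IsMultiplicative := by
  refine ⟨by simp [idDvdIndicator_apply], fun {a b} hab => ?_⟩
  have hdvd : ((a * b : ℕ) : ℤ) ∣ k ↔ (a : ℤ) ∣ k ∧ (b : ℤ) ∣ k := by
    simp only [Int.natCast_dvd]
    exact ⟨fun h => ⟨dvd_of_mul_right_dvd h, dvd_of_mul_left_dvd h⟩,
      fun h => hab.mul_dvd_of_dvd_of_dvd h.1 h.2⟩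
  simp only [idDvdIndicator_apply, hdvd]
  split_ifs <;> simp_all

theorem divisors_gcd_eq_filter (k : ℤ) {n : ℕ} (hn : n ≠ 0) :
    (Int.gcd k n).divisors = n.divisors.filter (fun d : ℕ => (d : ℤ) ∣ k) := by
  ext d
  simp only [Nat.mem_divisors, Finset.mem_filter, Int.dvd_gcd_iff, Int.natCast_dvd_natCast, ne_eq,
    Int.gcd_eq_zero_iff, Int.natCast_eq_zero, hn, and_false, not_false_eq_true, and_true]
  exact and_comm

theorem ramanujanSum_eq_idDvdIndicator_mul_moebius (n : ℕ) (k : ℤ) :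
    ramanujanSum n k = (idDvdIndicator k * μ) n := by
  rcases eq_or_ne n 0 with rfl | hn
  · simp [ramanujanSum]
  rw [mul_apply, Nat.sum_divisorsAntidiagonal (fun d e => idDvdIndicator k d * μ e),
    ramanujanSum, divisors_gcd_eq_filter k hn, Finset.sum_filter]
  simp only [idDvdIndicator_apply, ite_mul, zero_mul]

theorem ramanujanSum_mul_of_coprime (k : ℤ) {a b : ℕ} (hab : a.Coprime b) :
    ramanujanSum (a * b) k = ramanujanSum a k * ramanujanSum b k := by
  simp only [ramanujanSum_eq_idDvdIndicator_mul_moebius]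
  exact ((isMultiplicative_idDvdIndicator k).mul isMultiplicative_moebius).map_mul_of_coprime hab

theorem ramanujanSum_congr {n : ℕ} {a b : ℤ} (hab : a ≡ b [ZMOD n]) :
    ramanujanSum n a = ramanujanSum n b := by
  rw [ramanujanSum, ramanujanSum, ← Int.gcd_emod, hab, Int.gcd_emod]

theorem periodic_ramanujanSum_eval (p : Polynomial ℤ) {n L : ℕ} (hn : n ∣ L) :
    Periodic (fun k : ℕ => ramanujanSum n (p.eval (k : ℤ))) L := fun k => by
  have hL : p.eval ((k + L : ℕ) : ℤ) ≡ p.eval (k : ℤ) [ZMOD L] :=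
    Int.modEq_iff_dvd.2 <| by
      simpa using Polynomial.sub_dvd_eval_sub (k : ℤ) ((k + L : ℕ) : ℤ) p
  exact ramanujanSum_congr (hL.of_dvd (Int.natCast_dvd_natCast.2 hn))

theorem Function.Periodic.sum_Icc_one_eq_sum_range {M : Type*} [AddCommMonoid M] {f : ℕ → M}
    {L : ℕ} (hf : Periodic f L) :
    ∑ k ∈ Icc 1 L, f k = ∑ k ∈ range L, f k := by
  rw [← Ico_add_one_right_eq_Icc, ← zero_add 1, ← Finset.sum_Ico_add', ← range_eq_Ico]
  cases L with
  | zero => rfl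
  | succ L => rw [Finset.sum_range_succ, Finset.sum_range_succ', hf.eq]

theorem sum_range_eq_sum_zmod_val {M : Type*} [AddCommMonoid M] (L : ℕ) [NeZero L]
    (f : ℕ → M) :
    ∑ k ∈ range L, f k = ∑ x : ZMod L, f x.val := by
  obtain ⟨L, rfl⟩ := Nat.exists_eq_succ_of_ne_zero (NeZero.ne L)
  exact (Fin.sum_univ_eq_sum_range f _).symm

section PeriodicSums

variable {M : Type*} [CommSemiring M]

theorem sum_range_mul_of_coprime {f g : ℕ → M} {m n : ℕ} (hmn : m.Coprime n)
    (hf : Periodic f m) (hg : Periodic g n) :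
    ∑ k ∈ range (m * n), f k * g k = (∑ k ∈ range m, f k) * (∑ k ∈ range n, g k) := by
  rcases Nat.eq_zero_or_pos m with rfl | hm
  · simp
  rcases Nat.eq_zero_or_pos n with rfl | hn
  · simp
  have : NeZero m := ⟨hm.ne'⟩
  have : NeZero n := ⟨hn.ne'⟩
  have : NeZero (m * n) := ⟨(Nat.mul_pos hm hn).ne'⟩
  let e := (ZMod.chineseRemainder hmn).toEquiv
  have he : ∀ x, f x.val * g x.val = f (e x).1.val * g (e x).2.val := fun x => by
    change _ = f (ZMod.cast x : ZMod m × ZMod n).1.val * g (ZMod.cast x : ZMod m × ZMod n).2.val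
    rw [Prod.fst_zmod_cast, Prod.snd_zmod_cast, ZMod.cast_eq_val, ZMod.cast_eq_val,
      ZMod.val_natCast, ZMod.val_natCast, hf.map_mod_nat, hg.map_mod_nat]
  rw [sum_range_eq_sum_zmod_val, sum_range_eq_sum_zmod_val, sum_range_eq_sum_zmod_val,
    Fintype.sum_congr _ _ he, e.sum_comp (fun y => f y.1.val * g y.2.val),
    Fintype.sum_prod_type, Finset.sum_mul_sum]

theorem sum_Icc_mul_of_coprime {f g : ℕ → M} {m n : ℕ} (hmn : m.Coprime n)
    (hf : Periodic f m) (hg : Periodic g n) :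
    ∑ k ∈ Icc 1 (m * n), f k * g k = (∑ k ∈ Icc 1 m, f k) * (∑ k ∈ Icc 1 n, g k) := by
  have hfg : Periodic (fun k => f k * g k) (m * n) :=
    (mul_comm n m ▸ hf.nat_mul n).mul (hg.nat_mul m)
  rw [hfg.sum_Icc_one_eq_sum_range, hf.sum_Icc_one_eq_sum_range, hg.sum_Icc_one_eq_sum_range,
    sum_range_mul_of_coprime hmn hf hg]

end PeriodicSums

theorem periodic_prod_ramanujanSum_eval {ι R : Type*} [Fintype ι] [CommRing R]
    (p : ι → Polynomial ℤ) (m : ι → ℕ) {L : ℕ} (hL : ∀ i, m i ∣ L) :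
    Periodic (fun k : ℕ => ∏ i, (ramanujanSum (m i) ((p i).eval (k : ℤ)) : R)) L :=
  fun k => by simp only [periodic_ramanujanSum_eval (p _) (hL _) k]

theorem prod_ramanujanSum_mul_of_coprime {ι R : Type*} [Fintype ι] [CommRing R]
    (p : ι → Polynomial ℤ) {m n : ι → ℕ} (hmn : ∀ i, (m i).Coprime (n i)) (k : ℤ) :
    ∏ i, (ramanujanSum (m i * n i) ((p i).eval k) : R) =
      (∏ i, (ramanujanSum (m i) ((p i).eval k) : R)) *
        ∏ i, (ramanujanSum (n i) ((p i).eval k) : R) := by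
  simp only [ramanujanSum_mul_of_coprime _ (hmn _), Int.cast_mul, prod_mul_distrib]

theorem Finset.lcm_mul_eq_mul_lcm {ι : Type*} (s : Finset ι) (m n : ι → ℕ)
    (h : (s.lcm m).Coprime (s.lcm n)) :
    s.lcm (fun i => m i * n i) = s.lcm m * s.lcm n :=
  Nat.dvd_antisymm (Finset.lcm_dvd fun _ hi => mul_dvd_mul (dvd_lcm hi) (dvd_lcm hi))
    (h.mul_dvd_of_dvd_of_dvd (lcm_mono_fun fun _ _ => dvd_mul_right _ _)
      (lcm_mono_fun fun _ _ => dvd_mul_left _ _))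

theorem EG_multiplicative_general {r : ℕ} (g : Fin r → Polynomial ℤ)
    (m n : Fin r → ℕ)
    (h : Nat.Coprime (∏ i, m i) (∏ i, n i)) :
    EG g (fun i => m i * n i) = EG g m * EG g n := by
  have hlcm : (univ.lcm m).Coprime (univ.lcm n) := h.of_dvd (lcm_dvd_prod _ _) (lcm_dvd_prod _ _)
  have hmn : ∀ i, (m i).Coprime (n i) := fun i =>
    h.of_dvd (dvd_prod_of_mem m (mem_univ i)) (dvd_prod_of_mem n (mem_univ i))
  have hm_periodic := periodic_prod_ramanujanSum_eval (R := ℚ) g m fun i => dvd_lcm (mem_univ i)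
  have hn_periodic := periodic_prod_ramanujanSum_eval (R := ℚ) g n fun i => dvd_lcm (mem_univ i)
  simp only [EG, univ.lcm_mul_eq_mul_lcm m n hlcm, prod_ramanujanSum_mul_of_coprime g hmn,
    sum_Icc_mul_of_coprime hlcm hm_periodic hn_periodic]
  push_cast
  ring

theorem EG_multiplicative {r : ℕ} (g : Fin r → Polynomial ℤ)
    (m n : Fin r → ℕ) (hm : ∀ i, 0 < m i) (hn : ∀ i, 0 < n i)
    (h : Nat.Coprime (∏ i, m i) (∏ i, n i)) :
    EG g (fun i => m i * n i) = EG g m * EG g n :=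
  EG_multiplicative_general g m n h
end

section
/- Write n = 2^j · m with m odd. Then (1/n)·Σ_{k=1}^{n} c_n(k² − 1) equals 1 if j ∈ {0, 2} and m is squarefree, equals 2 if j = 3 and m is squarefree, and equals 0 otherwise. -/
/-!
Expanding `c_n(k² - 1) = ∑_{d ∣ n, d ∣ k² - 1} d μ(n/d)` and counting the `k ∈ [1, n]` with
`d ∣ k² - 1` (which depends only on `k mod d`) gives `(1/n) ∑_k c_n(k² - 1) = (μ * N)(n)`, where
`N(d)` is the number of square roots of `1` in `ℤ/dℤ`. By the Chinese remainder theorem `N`, hence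
`μ * N`, is multiplicative, and `(μ * N)(p^a) = N(p^a) - N(p^(a-1))`. For odd `p` the roots mod
`p^a` are `±1`; mod `2^(c+2)` they are the lifts of `±1` mod `2^(c+1)`, so `N(2) = 1`, `N(4) = 2`
and `N(2^a) = 4` for `a ≥ 3`.
-/

open Finset ArithmeticFunction

open scoped ArithmeticFunction.Moebius

theorem Nat.filter_Ico_card_eq_mul_count_of_periodic (a q d : ℕ) (p : ℕ → Prop)
    [DecidablePred p] (pp : Function.Periodic p d) :
    #{k ∈ Ico a (a + q * d) | p k} = q * d.count p := by
  induction q with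
  | zero => simp
  | succ q ih =>
    rw [add_mul, one_mul, ← add_assoc, ← Ico_union_Ico_eq_Ico (b := a + q * d) (by omega)
      (by omega), filter_union, card_union_of_disjoint
      (disjoint_filter_filter (Ico_disjoint_Ico_consecutive _ _ _)), ih,
      Nat.filter_Ico_card_eq_of_periodic _ _ p pp, add_mul, one_mul]

theorem ZMod.count_natCast_eq_card_filter (d : ℕ) [NeZero d] (P : ZMod d → Prop)
    [DecidablePred P] : d.count (fun k => P k) = #{x | P x} := by
  rw [Nat.count_eq_card_filter_range]
  refine card_nbij' (fun k => (k : ZMod d)) ZMod.val ?_ ?_ ?_ ?_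
  · intro k hk
    simp_all
  · intro x hx
    simp_all [ZMod.val_lt]
  · intro k hk
    simp_all [Nat.mod_eq_of_lt]
  · intro x _
    simp

theorem ZMod.intCast_sq_eq_one_iff_dvd (d : ℕ) (a : ℤ) :
    (a : ZMod d) ^ 2 = 1 ↔ (d : ℤ) ∣ a ^ 2 - 1 := by
  rw [← ZMod.intCast_zmod_eq_zero_iff_dvd, Int.cast_sub, Int.cast_pow, Int.cast_one, sub_eq_zero]

theorem ZMod.intCast_eq_one_iff_dvd (d : ℕ) (k : ℤ) :
    (k : ZMod d) = 1 ↔ (d : ℤ) ∣ k - 1 := by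
  rw [← ZMod.intCast_zmod_eq_zero_iff_dvd, Int.cast_sub, Int.cast_one, sub_eq_zero]

theorem ZMod.intCast_eq_neg_one_iff_dvd (d : ℕ) (k : ℤ) :
    (k : ZMod d) = -1 ↔ (d : ℤ) ∣ k + 1 := by
  rw [← ZMod.intCast_zmod_eq_zero_iff_dvd, Int.cast_add, Int.cast_one, eq_neg_iff_add_eq_zero]

theorem Int.prime_pow_dvd_sq_sub_one_iff {p : ℕ} (hp : p.Prime) (hp2 : p ≠ 2) (a : ℕ)
    (k : ℤ) :
    (p : ℤ) ^ a ∣ k ^ 2 - 1 ↔ (p : ℤ) ^ a ∣ k - 1 ∨ (p : ℤ) ^ a ∣ k + 1 := by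
  have hprime : Prime (p : ℤ) := Nat.prime_iff_prime_int.mp hp
  rw [show k ^ 2 - 1 = (k - 1) * (k + 1) by ring]
  refine ⟨fun h => ?_, fun h =>
    h.elim (fun h => dvd_mul_of_dvd_left h) (fun h => dvd_mul_of_dvd_right h)⟩
  have hnot : ¬ ((p : ℤ) ∣ k - 1 ∧ (p : ℤ) ∣ k + 1) := by
    rintro ⟨h₁, h₂⟩
    have : (p : ℤ) ∣ 2 := by simpa using dvd_sub h₂ h₁
    exact hp2 ((Nat.prime_dvd_prime_iff_eq hp Nat.prime_two).mp (by exact_mod_cast this))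
  rcases not_and_or.mp hnot with h₁ | h₁
  · exact .inr (hprime.pow_dvd_of_dvd_mul_left a h₁ h)
  · exact .inl (hprime.pow_dvd_of_dvd_mul_right a h₁ h)

theorem Int.two_pow_dvd_sq_sub_one_iff (c : ℕ) (k : ℤ) :
    2 ^ (c + 2) ∣ k ^ 2 - 1 ↔ 2 ^ (c + 1) ∣ k - 1 ∨ 2 ^ (c + 1) ∣ k + 1 := by
  constructor
  · intro h
    have hk : Odd k := by
      have h2 : Even (k ^ 2 - 1) := even_iff_two_dvd.mpr ((dvd_pow_self 2 (by omega)).trans h)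
      rwa [Int.even_sub_one, Int.even_pow' two_ne_zero, Int.not_even_iff_odd] at h2
    obtain ⟨t, rfl⟩ := hk
    have ht : 2 ^ c ∣ t * (t + 1) := by
      rw [← mul_dvd_mul_iff_left (four_ne_zero (α := ℤ))]
      rwa [show (4 : ℤ) * 2 ^ c = 2 ^ (c + 2) by ring,
        show 4 * (t * (t + 1)) = (2 * t + 1) ^ 2 - 1 by ring]
    rw [show 2 * t + 1 - 1 = 2 * t by ring, show 2 * t + 1 + 1 = 2 * (t + 1) by ring, pow_succ',
      mul_dvd_mul_iff_left two_ne_zero, mul_dvd_mul_iff_left two_ne_zero]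
    rcases Int.even_or_odd t with heven | hodd
    · left
      refine Int.prime_two.pow_dvd_of_dvd_mul_right c ?_ ht
      rwa [← even_iff_two_dvd, Int.even_add_one, not_not]
    · right
      refine Int.prime_two.pow_dvd_of_dvd_mul_left c ?_ ht
      rwa [← even_iff_two_dvd, Int.not_even_iff_odd]
  · rintro (⟨s, hs⟩ | ⟨s, hs⟩)
    · exact ⟨s * (2 ^ c * s + 1), by rw [show k = 2 ^ (c + 1) * s + 1 by linarith]; ring⟩
    · exact ⟨s * (2 ^ c * s - 1), by rw [show k = 2 ^ (c + 1) * s - 1 by linarith]; ring⟩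

theorem ZMod.sq_eq_one_iff_of_prime_pow {p : ℕ} (hp : p.Prime) (hp2 : p ≠ 2) (a : ℕ)
    (x : ZMod (p ^ a)) : x ^ 2 = 1 ↔ x = 1 ∨ x = -1 := by
  obtain ⟨k, rfl⟩ := ZMod.intCast_surjective x
  rw [ZMod.intCast_sq_eq_one_iff_dvd, ZMod.intCast_eq_one_iff_dvd, ZMod.intCast_eq_neg_one_iff_dvd]
  push_cast
  exact Int.prime_pow_dvd_sq_sub_one_iff hp hp2 a k

theorem ZMod.intCast_sq_eq_one_iff_two_pow (c : ℕ) (k : ℤ) :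
    (k : ZMod (2 ^ (c + 2))) ^ 2 = 1 ↔
      (k : ZMod (2 ^ (c + 1))) = 1 ∨ (k : ZMod (2 ^ (c + 1))) = -1 := by
  rw [ZMod.intCast_sq_eq_one_iff_dvd, ZMod.intCast_eq_one_iff_dvd, ZMod.intCast_eq_neg_one_iff_dvd]
  push_cast
  exact Int.two_pow_dvd_sq_sub_one_iff c k

theorem ArithmeticFunction.moebius_mul_apply_prime_pow_succ (f : ArithmeticFunction ℤ) {p : ℕ}
    (hp : p.Prime) (k : ℕ) : (μ * f) (p ^ (k + 1)) = f (p ^ (k + 1)) - f (p ^ k) := by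
  rw [mul_apply, Nat.sum_divisorsAntidiagonal fun a b => μ a * f b,
    Nat.sum_divisors_prime_pow hp, sum_range_succ', sum_range_succ']
  have hsq (i : ℕ) : μ (p ^ (i + 2)) = 0 := by
    simp [moebius_apply_prime_pow hp]
  simp [hsq, moebius_apply_prime hp]
  rw [pow_succ, Nat.mul_div_cancel _ hp.pos]
  ring

theorem ramanujanSum_eq_sum_divisors {n : ℕ} (hn : n ≠ 0) (a : ℤ) :
    ramanujanSum n a = ∑ d ∈ n.divisors, if (d : ℤ) ∣ a then (d : ℤ) * μ (n / d) else 0 := by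
  rw [ramanujanSum, ← sum_filter]
  congr 1
  ext d
  simp [Int.natCast_dvd, Int.gcd, Nat.dvd_gcd_iff, hn]
  tauto

/-- Counted over the representatives `0 ≤ k < d`, so that the value at `0` is `0`. -/
def sqrtOneCount : ArithmeticFunction ℕ :=
  ⟨fun d => d.count fun k => (k : ZMod d) ^ 2 = 1, Nat.count_zero _⟩

theorem sqrtOneCount_apply (d : ℕ) :
    sqrtOneCount d = d.count fun k => (k : ZMod d) ^ 2 = 1 := rfl

theorem sqrtOneCount_eq_card (d : ℕ) [NeZero d] :
    sqrtOneCount d = #{x : ZMod d | x ^ 2 = 1} :=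
  ZMod.count_natCast_eq_card_filter d (· ^ 2 = 1)

theorem card_filter_Icc_sq_sub_one {n d : ℕ} (hd : d ∣ n) :
    #((Icc 1 n).filter fun k : ℕ => (d : ℤ) ∣ (k : ℤ) ^ 2 - 1) = n / d * sqrtOneCount d := by
  have hperiodic : Function.Periodic (fun k : ℕ => (k : ZMod d) ^ 2 = 1) d := by
    intro k
    simp
  obtain ⟨q, rfl⟩ := hd
  rcases d.eq_zero_or_pos with rfl | hd
  · simp
  rw [Nat.mul_div_cancel_left q hd, sqrtOneCount_apply,
    ← Nat.filter_Ico_card_eq_mul_count_of_periodic 1 q d _ hperiodic, add_comm, mul_comm,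
    Ico_add_one_right_eq_Icc]
  congr 1
  refine filter_congr fun k _ => ?_
  exact_mod_cast (ZMod.intCast_sq_eq_one_iff_dvd d k).symm

theorem sum_ramanujanSum_sq_sub_one {n : ℕ} (hn : n ≠ 0) :
    ∑ k ∈ Icc 1 n, ramanujanSum n ((k : ℤ) ^ 2 - 1) = n * (μ * ↑sqrtOneCount) n := by
  simp_rw [ramanujanSum_eq_sum_divisors hn]
  rw [sum_comm, mul_apply,
    Nat.sum_divisorsAntidiagonal' fun a b => μ a * (sqrtOneCount : ArithmeticFunction ℤ) b,
    mul_sum]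
  refine sum_congr rfl fun d hd => ?_
  have hdn : ((n / d : ℕ) : ℤ) * d = n := by
    exact_mod_cast Nat.div_mul_cancel (Nat.dvd_of_mem_divisors hd)
  rw [← sum_filter, sum_const, card_filter_Icc_sq_sub_one (Nat.dvd_of_mem_divisors hd),
    nsmul_eq_mul, natCoe_apply, Nat.cast_mul]
  linear_combination (μ (n / d) * (sqrtOneCount d : ℤ)) * hdn

theorem sqrtOneCount_isMultiplicative : sqrtOneCount.IsMultiplicative := by
  refine IsMultiplicative.iff_ne_zero.mpr
    ⟨by rw [sqrtOneCount_apply]; decide, fun {a b} ha hb hab => ?_⟩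
  have : NeZero a := ⟨ha⟩
  have : NeZero b := ⟨hb⟩
  simp only [sqrtOneCount_eq_card]
  rw [← card_product, card_equiv (ZMod.chineseRemainder hab).toEquiv]
  intro x
  simp only [mem_filter, mem_univ, true_and, mem_product]
  rw [← (ZMod.chineseRemainder hab).injective.eq_iff, map_pow, map_one]
  simp [Prod.ext_iff]

theorem moebius_mul_sqrtOneCount_isMultiplicative :
    (μ * ↑sqrtOneCount : ArithmeticFunction ℤ).IsMultiplicative :=
  isMultiplicative_moebius.mul sqrtOneCount_isMultiplicative.natCast

theorem sqrtOneCount_prime_pow {p : ℕ} (hp : p.Prime) (hp2 : p ≠ 2) {a : ℕ} (ha : a ≠ 0) :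
    sqrtOneCount (p ^ a) = 2 := by
  have : NeZero (p ^ a) := ⟨pow_ne_zero a hp.ne_zero⟩
  have : Fact (2 < p ^ a) := ⟨lt_of_lt_of_le (hp.two_le.lt_of_ne' hp2) (Nat.le_self_pow ha p)⟩
  have hroots : ({x : ZMod (p ^ a) | x ^ 2 = 1} : Finset _) = {1, -1} := by
    ext x
    simp [ZMod.sq_eq_one_iff_of_prime_pow hp hp2]
  rw [sqrtOneCount_eq_card, hroots, card_pair (ZMod.neg_one_ne_one (n := p ^ a)).symm]

theorem sqrtOneCount_two_pow_add_two (c : ℕ) :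
    sqrtOneCount (2 ^ (c + 2)) = 2 * #({1, -1} : Finset (ZMod (2 ^ (c + 1)))) := by
  have hperiodic : Function.Periodic
      (fun k : ℕ => (k : ZMod (2 ^ (c + 1))) = 1 ∨ (k : ZMod (2 ^ (c + 1))) = -1)
      (2 ^ (c + 1)) := by
    intro k
    simp
  calc sqrtOneCount (2 ^ (c + 2))
      = #((Ico 0 (0 + 2 * 2 ^ (c + 1))).filter fun k : ℕ =>
          (k : ZMod (2 ^ (c + 1))) = 1 ∨ (k : ZMod (2 ^ (c + 1))) = -1) := by
        rw [sqrtOneCount_apply, Nat.count_eq_card_filter_range, range_eq_Ico, zero_add,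
          ← pow_succ']
        congr 1
        refine filter_congr fun k _ => ?_
        exact_mod_cast ZMod.intCast_sq_eq_one_iff_two_pow c k
    _ = 2 * #{x : ZMod (2 ^ (c + 1)) | x = 1 ∨ x = -1} := by
        rw [Nat.filter_Ico_card_eq_mul_count_of_periodic _ _ _ _ hperiodic,
          ZMod.count_natCast_eq_card_filter _ (fun x => x = 1 ∨ x = -1)]
    _ = 2 * #({1, -1} : Finset (ZMod (2 ^ (c + 1)))) := by
        congr 2
        ext x
        simp

theorem sqrtOneCount_two_pow_add_three (c : ℕ) : sqrtOneCount (2 ^ (c + 3)) = 4 := by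
  have : Fact (2 < 2 ^ (c + 2)) := ⟨by
    calc 2 < 2 ^ 2 := by norm_num
      _ ≤ 2 ^ (c + 2) := Nat.pow_le_pow_right two_pos (by omega)⟩
  rw [sqrtOneCount_two_pow_add_two, card_pair (ZMod.neg_one_ne_one (n := 2 ^ (c + 2))).symm]

theorem moebius_mul_sqrtOneCount_two_pow (j : ℕ) :
    (μ * ↑sqrtOneCount : ArithmeticFunction ℤ) (2 ^ j) =
      if j = 0 ∨ j = 2 then 1 else if j = 3 then 2 else 0 := by
  have hN1 : sqrtOneCount 1 = 1 := sqrtOneCount_isMultiplicative.map_one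
  have hN2 : sqrtOneCount 2 = 1 := by decide
  have hN4 : sqrtOneCount 4 = 2 := by decide
  have hN8 : sqrtOneCount 8 = 4 := sqrtOneCount_two_pow_add_three 0
  match j with
  | 0 => simp [hN1]
  | c + 1 =>
    rw [moebius_mul_apply_prime_pow_succ _ Nat.prime_two]
    match c with
    | 0 => simp [hN1, hN2]
    | 1 => simp [hN2, hN4]
    | 2 => simp [hN4, hN8]
    | c + 3 => simp [sqrtOneCount_two_pow_add_three]

theorem moebius_mul_sqrtOneCount_prime_pow {p : ℕ} (hp : p.Prime) (hp2 : p ≠ 2) {a : ℕ}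
    (ha : a ≠ 0) :
    (μ * ↑sqrtOneCount : ArithmeticFunction ℤ) (p ^ a) = if a = 1 then 1 else 0 := by
  obtain ⟨b, rfl⟩ := Nat.exists_eq_add_one_of_ne_zero ha
  rw [moebius_mul_apply_prime_pow_succ _ hp]
  have hN1 : sqrtOneCount 1 = 1 := sqrtOneCount_isMultiplicative.map_one
  have hNp : sqrtOneCount p = 2 := by simpa using sqrtOneCount_prime_pow hp hp2 one_ne_zero
  rcases b with _ | b
  · simp [hN1, hNp]
  · simp [sqrtOneCount_prime_pow hp hp2]

theorem moebius_mul_sqrtOneCount_of_odd {m : ℕ} (hm : Odd m) :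
    (μ * ↑sqrtOneCount : ArithmeticFunction ℤ) m = if Squarefree m then 1 else 0 := by
  have hm0 : m ≠ 0 := hm.pos.ne'
  have hlocal : ∀ p ∈ m.factorization.support,
      (μ * ↑sqrtOneCount : ArithmeticFunction ℤ) (p ^ m.factorization p) =
        if m.factorization p = 1 then 1 else 0 := by
    intro p hp
    have hpm : p ∈ m.primeFactors := Nat.support_factorization m ▸ hp
    exact moebius_mul_sqrtOneCount_prime_pow (Nat.prime_of_mem_primeFactors hpm)
      (hm.ne_two_of_dvd_nat (Nat.dvd_of_mem_primeFactors hpm)) (Finsupp.mem_support_iff.mp hp)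
  rw [moebius_mul_sqrtOneCount_isMultiplicative.multiplicative_factorization _ hm0, Finsupp.prod, prod_congr rfl hlocal, prod_boole]
  refine if_congr ?_ rfl rfl
  simp only [Nat.squarefree_iff_factorization_le_one hm0, Finsupp.mem_support_iff]
  exact ⟨fun h p => by by_cases hp : m.factorization p = 0 <;> simp_all,
    fun h p hp => by have := h p; omega⟩

theorem eval_E_quadratic_general (n : ℕ) (j m : ℕ) (hm : Odd m)
    (hnjm : n = 2 ^ j * m) :
    (1 / (n : ℚ)) * ∑ k ∈ Icc 1 n, (ramanujanSum n ((k : ℤ) ^ 2 - 1) : ℚ) =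
    if (j = 0 ∨ j = 2) ∧ Squarefree m then 1
    else if j = 3 ∧ Squarefree m then 2
    else 0 := by
  have hn : n ≠ 0 := hnjm ▸ mul_ne_zero (pow_ne_zero j two_ne_zero) hm.pos.ne'
  have hcop : Nat.Coprime (2 ^ j) m := .pow_left j (Nat.coprime_two_left.mpr hm)
  rw [← Int.cast_sum, sum_ramanujanSum_sq_sub_one hn, hnjm,
    moebius_mul_sqrtOneCount_isMultiplicative.map_mul_of_coprime hcop,
    moebius_mul_sqrtOneCount_two_pow, moebius_mul_sqrtOneCount_of_odd hm, ← hnjm]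
  field_simp
  split_ifs <;> simp_all

theorem eval_E_quadratic (n : ℕ) (hn : 0 < n) (j m : ℕ) (hm : Odd m)
    (hnjm : n = 2 ^ j * m) :
    (1 / (n : ℚ)) * ∑ k ∈ Icc 1 n, (ramanujanSum n ((k : ℤ) ^ 2 - 1) : ℚ) =
    if (j = 0 ∨ j = 2) ∧ Squarefree m then 1
    else if j = 3 ∧ Squarefree m then 2
    else 0 :=
  eval_E_quadratic_general n j m hm hnjm
end
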